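/- With L partitioned into finitely many constructible classes, assume additionally that every irreducible component of L is a union of classes. Then a class J coincides with an irreducible component of L if and only if J is isolated in the closure order. -/
import Mathlib


/-- A set is constructible if it is a finite union of locally closed sets. -/
def IsConstructibleSet {X : Type*} [TopologicalSpace X] (Y : Set X) : Prop :=
  ∃ (n : ℕ) (s : Fin n → Set X), (∀ i, IsLocallyClosed (s i)) ∧ Y = ⋃ i, s i

/-- `S` is an irreducible component of `L`: a maximal irreducible subset of `L`. -/
def IsIrredComponentOf {X : Type*} [TopologicalSpace X] (S L : Set X) : Prop :=
  S ⊆ L ∧ IsIrreducible S ∧ ∀ T : Set X, T ⊆ L → IsIrreducible T → S ⊆ T → S = T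

theorem exists_component_mem {X : Type*} [TopologicalSpace X] {L : Set X} {x : X}
    (hx : x ∈ L) : ∃ S : Set X, IsIrredComponentOf S L ∧ x ∈ S := by
  obtain ⟨m, hsm, hm⟩ :=
    zorn_subset_nonempty { t : Set X | t ⊆ L ∧ IsPreirreducible t }
      (fun c hc hcc _ => by
        refine ⟨⋃₀ c, ⟨Set.sUnion_subset fun t ht => (hc ht).1, ?_⟩,
          fun _ hxc => Set.subset_sUnion_of_mem hxc⟩
        rintro u v hu hv ⟨y, hy, hyu⟩ ⟨z, hz, hzv⟩
        obtain ⟨p, hpc, hyp⟩ := Set.mem_sUnion.1 hy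
        obtain ⟨q, hqc, hzq⟩ := Set.mem_sUnion.1 hz
        rcases hcc.total hpc hqc with hpq | hqp
        · obtain ⟨w, hwp, hwuv⟩ := (hc hqc).2 u v hu hv ⟨y, hpq hyp, hyu⟩ ⟨z, hzq, hzv⟩
          exact ⟨w, Set.mem_sUnion_of_mem hwp hqc, hwuv⟩
        · obtain ⟨w, hwp, hwuv⟩ := (hc hpc).2 u v hu hv ⟨y, hyp, hyu⟩ ⟨z, hqp hzq, hzv⟩
          exact ⟨w, Set.mem_sUnion_of_mem hwp hpc, hwuv⟩)
      {x} ⟨Set.singleton_subset_iff.2 hx, isPreirreducible_singleton⟩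
  refine ⟨m, ⟨hm.prop.1, ⟨⟨x, hsm rfl⟩, hm.prop.2⟩, ?_⟩, hsm rfl⟩
  intro T hTL hT hmT
  exact (hm.eq_of_subset ⟨hTL, hT.2⟩ hmT)

theorem isIrreducible_between {X : Type*} [TopologicalSpace X] {S T : Set X}
    (hS : IsIrreducible S) (h1 : S ⊆ T) (h2 : T ⊆ closure S) : IsIrreducible T := by
  refine ⟨hS.nonempty.mono h1, ?_⟩
  rintro u v hu hv ⟨y, hyT, hyu⟩ ⟨z, hzT, hzv⟩
  have hSu : (S ∩ u).Nonempty := by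
    have := mem_closure_iff.1 (h2 hyT) u hu hyu
    exact this.imp fun w hw => ⟨hw.2, hw.1⟩
  have hSv : (S ∩ v).Nonempty := by
    have := mem_closure_iff.1 (h2 hzT) v hv hzv
    exact this.imp fun w hw => ⟨hw.2, hw.1⟩
  obtain ⟨w, hwS, hwuv⟩ := hS.2 u v hu hv
    ⟨hSu.choose, hSu.choose_spec.1, hSu.choose_spec.2⟩
    ⟨hSv.choose, hSv.choose_spec.1, hSv.choose_spec.2⟩
  exact ⟨w, h1 hwS, hwuv⟩

/-- With `L` partitioned into finitely many pairwise disjoint nonempty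
constructible classes, and assuming every irreducible component of `L` is a union of classes
(each class meeting a component is contained in it), a class `Jᵢ` coincides with an
irreducible component of `L` iff it is isolated in the closure order. -/
theorem stmt_9 {X : Type*} [TopologicalSpace X] {r : ℕ} (J : Fin r → Set X) (L : Set X)
    (hcon : ∀ i, IsConstructibleSet (J i))
    (hne : ∀ i, (J i).Nonempty)
    (hdisj : ∀ i j, i ≠ j → J i ∩ J j = ∅)
    (hL : L = ⋃ i, J i)
    (hunion : ∀ S : Set X, IsIrredComponentOf S L →
      ∀ j : Fin r, (J j ∩ S).Nonempty → J j ⊆ S)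
    (i : Fin r) :
    (∃ S : Set X, IsIrredComponentOf S L ∧ J i = S) ↔
      ((∀ j : Fin r, J i ⊆ closure (J j) → J i = J j) ∧
       (∀ j : Fin r, J j ⊆ closure (J i) → J j = J i)) := by
  have hJL : ∀ k, J k ⊆ L := fun k => hL ▸ Set.subset_iUnion J k
  have eq_of_sub : ∀ j k : Fin r, J j ⊆ J k → j = k := by
    intro j k hjk
    by_contra hne'
    obtain ⟨y, hy⟩ := hne j
    exact absurd (hdisj j k hne' ▸ ⟨hy, hjk hy⟩) (Set.notMem_empty y)
  constructor
  · rintro ⟨S, ⟨hSL, hSirr, hSmax⟩, hJS⟩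
    constructor
    · intro j hij
      obtain ⟨x, hx⟩ := hne j
      obtain ⟨S', ⟨hS'L, hS'irr, hS'max⟩, hxS'⟩ := exists_component_mem (hJL j hx)
      have hjS' : J j ⊆ S' := hunion S' ⟨hS'L, hS'irr, hS'max⟩ j ⟨x, hx, hxS'⟩
      have hScl : S ⊆ closure S' := by
        rw [← hJS] at *
        exact hij.trans ((closure_mono hjS').trans subset_rfl)
      have hT : IsIrreducible (S' ∪ S) :=
        isIrreducible_between hS'irr Set.subset_union_left
          (Set.union_subset subset_closure hScl)
      have hS'eq : S' = S' ∪ S :=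
        hS'max _ (Set.union_subset hS'L hSL) hT Set.subset_union_left
      have hSS' : S ⊆ S' := hS'eq ▸ Set.subset_union_right
      have : S = S' := hSmax S' hS'L hS'irr hSS'
      have : J j ⊆ J i := by rw [hJS, this]; exact hjS'
      rw [eq_of_sub j i this]
    · intro j hji
      have hT : IsIrreducible (S ∪ J j) :=
        isIrreducible_between hSirr Set.subset_union_left
          (Set.union_subset subset_closure (hJS ▸ hji))
      have : S = S ∪ J j :=
        hSmax _ (Set.union_subset hSL (hJL j)) hT Set.subset_union_left
      have hjS : J j ⊆ J i := by rw [hJS, this]; exact Set.subset_union_right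
      rw [eq_of_sub j i hjS]
  · classical
    rintro ⟨h1, h2⟩
    obtain ⟨x, hx⟩ := hne i
    obtain ⟨S, hScomp, hxS⟩ := exists_component_mem (hJL i hx)
    obtain ⟨hSL, hSirr, hSmax⟩ := hScomp
    have hiS : J i ⊆ S := hunion S ⟨hSL, hSirr, hSmax⟩ i ⟨x, hx, hxS⟩
    -- S is contained in the closure of some class meeting it
    have hcover : S ⊆ ⋃₀ ↑(Finset.image (fun k => closure (S ∩ J k)) Finset.univ) := by
      intro y hyS
      have : y ∈ L := hSL hyS
      rw [hL] at this
      obtain ⟨k, hk⟩ := Set.mem_iUnion.1 this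
      exact ⟨closure (S ∩ J k), by simp, subset_closure ⟨hyS, hk⟩⟩
    obtain ⟨z, hz, hSz⟩ := (isIrreducible_iff_sUnion_isClosed.1 hSirr) _
      (by simp only [Finset.mem_image]; rintro z ⟨k, -, rfl⟩; exact isClosed_closure) hcover
    simp only [Finset.mem_image, Finset.mem_univ, true_and] at hz
    obtain ⟨k, rfl⟩ := hz
    have hSJk : (S ∩ J k).Nonempty := by
      by_contra hemp
      rw [Set.not_nonempty_iff_eq_empty] at hemp
      rw [hemp, closure_empty] at hSz
      exact absurd (hSz hxS) (Set.notMem_empty x)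
    have hik : J i = J k :=
      h1 k (hiS.trans (hSz.trans (closure_mono Set.inter_subset_right)))
    have hScli : S ⊆ closure (J i) := hik ▸ hSz.trans (closure_mono Set.inter_subset_right)
    refine ⟨S, ⟨hSL, hSirr, hSmax⟩, subset_antisymm hiS ?_⟩
    intro y hyS
    have : y ∈ L := hSL hyS
    rw [hL] at this
    obtain ⟨j, hj⟩ := Set.mem_iUnion.1 this
    have hjS : J j ⊆ S := hunion S ⟨hSL, hSirr, hSmax⟩ j ⟨y, hj, hyS⟩
    have : J j = J i := h2 j (hjS.trans hScli)
    exact this ▸ hj
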